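/- arXiv:2106.12055 — 3 statements merged into one kernel-verified Lean document; each statement's English description precedes it below -/
import Mathlib

section
/- (Valid inequality.) If H ⊆ J is an anchored set for deadline M and uncertainty set Δ, then for every j ∈ H with L^Δ(s,j) > L⁰(s,j) one has M ≥ L⁰(s,j) + (L^Δ(s,j) − L⁰(s,j)) + L⁰(j,t); more generally any schedule z with z_t ≤ M satisfying z_j ≥ L⁰(s,j) + (L^Δ(s,j) − L⁰(s,j)) h_j and z_t − z_j ≥ L⁰(j,t) forces h_j ≤ ⌊(M − L⁰(s,j) − L⁰(j,t)) / (L^Δ(s,j) − L⁰(s,j))⌋ for binary h_j. -/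
/- A worst-case scenario `δ ∈ Δ` is realised by a schedule `y` that agrees with `x` on the
anchored set `H`, so for `j ∈ H` the start `x j = y j` is at least the length of a longest
`s`–`j` path under `p + δ`, i.e. `x j ≥ L^Δ(s,j)`; the nominal schedule `x` adds at least
`L⁰(j,t)` before `t`, and `x t ≤ M`. The bound on a binary `h_j` is Chvátal–Gomory rounding
of `(L^Δ(s,j) - L⁰(s,j)) h_j ≤ M - L⁰(s,j) - L⁰(j,t)`. -/

/-- Length of a path (given as a list of vertices) when each arc `(i,j)` has
length `q i` (the duration of its source vertex). -/
def PathLen {V : Type*} (q : V → ℝ) (l : List V) : ℝ := (l.dropLast.map q).sum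

/-- `l` is a path from `i` to `j` in the digraph with arc relation `A`. -/
def IsPath {V : Type*} (A : V → V → Prop) (i j : V) (l : List V) : Prop :=
  l ≠ [] ∧ l.Chain' A ∧ l.head? = some i ∧ l.getLast? = some j

/-- Length of a path for arc-indexed weights `w`. -/
def LenW {V : Type*} (w : V → V → ℝ) : List V → ℝ
  | a :: b :: l => w a b + LenW w (b :: l)
  | _ => 0

/-- `x` is a schedule of the precedence graph `(V, A)` with durations `q` and source `s`. -/
def Sched {V : Type*} (A : V → V → Prop) (s : V) (q x : V → ℝ) : Prop :=
  x s = 0 ∧ (∀ v, 0 ≤ x v) ∧ ∀ i j, A i j → q i ≤ x j - x i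

/-- `H` is `x`-anchored for the uncertainty set `Δ`. -/
def XAnchored {V : Type*} (A : V → V → Prop) (s : V) (p : V → ℝ)
    (Δ : Set (V → ℝ)) (x : V → ℝ) (H : Set V) : Prop :=
  ∀ δ ∈ Δ, ∃ y, Sched A s (fun v => p v + δ v) y ∧ ∀ i ∈ H, y i = x i

/-- `L` is the longest `i`–`j` path length under durations `q`. -/
def IsLongest {V : Type*} (A : V → V → Prop) (q : V → ℝ) (i j : V) (L : ℝ) : Prop :=
  IsGreatest {r | ∃ l, IsPath A i j l ∧ PathLen q l = r} L

/-- `L` is the worst-case longest `i`–`j` path length over the uncertainty set `Δ`. -/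
def IsWorst {V : Type*} (A : V → V → Prop) (p : V → ℝ) (Δ : Set (V → ℝ))
    (i j : V) (L : ℝ) : Prop :=
  IsGreatest {r | ∃ δ ∈ Δ, ∃ l, IsPath A i j l ∧ PathLen (fun v => p v + δ v) l = r} L

lemma pathLen_cons_cons {V : Type*} (q : V → ℝ) (a b : V) (l : List V) :
    PathLen q (a :: b :: l) = q a + PathLen q (b :: l) := by
  simp [PathLen]

lemma pathLen_le_sub_of_forall_arc {V : Type*} {A : V → V → Prop} {q x : V → ℝ}
    (harc : ∀ i j, A i j → q i ≤ x j - x i) :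
    ∀ {l : List V} {i j : V}, IsPath A i j l → PathLen q l ≤ x j - x i
  | [], _, _, hl => absurd rfl hl.1
  | [a], i, j, ⟨_, _, hhd, hlast⟩ => by
    obtain rfl : a = i := by simpa using hhd
    obtain rfl : a = j := by simpa using hlast
    simp [PathLen]
  | a :: b :: l, i, j, ⟨_, hchain, hhd, hlast⟩ => by
    obtain rfl : a = i := by simpa using hhd
    obtain ⟨hab, htail⟩ := List.isChain_cons_cons.mp hchain
    have hrest : PathLen q (b :: l) ≤ x j - x b :=
      pathLen_le_sub_of_forall_arc harc
        ⟨List.cons_ne_nil b l, htail, rfl, by simpa [List.getLast?_cons_cons] using hlast⟩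
    rw [pathLen_cons_cons]
    linarith [harc a b hab]

lemma Sched.pathLen_le_sub {V : Type*} {A : V → V → Prop} {s : V} {q x : V → ℝ}
    (hx : Sched A s q x) {l : List V} {i j : V} (hl : IsPath A i j l) :
    PathLen q l ≤ x j - x i :=
  pathLen_le_sub_of_forall_arc hx.2.2 hl

lemma Sched.le_sub_of_isLongest {V : Type*} {A : V → V → Prop} {s : V} {q x : V → ℝ}
    (hx : Sched A s q x) {i j : V} {L : ℝ} (hL : IsLongest A q i j L) :
    L ≤ x j - x i := by
  obtain ⟨l, hl, rfl⟩ := hL.1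
  exact hx.pathLen_le_sub hl

lemma XAnchored.le_of_isWorst {V : Type*} {A : V → V → Prop} {s : V} {p : V → ℝ}
    {Δ : Set (V → ℝ)} {x : V → ℝ} {H : Set V} (hx : XAnchored A s p Δ x H)
    {j : V} (hj : j ∈ H) {L : ℝ} (hL : IsWorst A p Δ s j L) :
    L ≤ x j := by
  obtain ⟨δ, hδ, l, hl, rfl⟩ := hL.1
  obtain ⟨y, hy, hyx⟩ := hx δ hδ
  have hpath := hy.pathLen_le_sub hl
  rwa [hy.1, hyx j hj, sub_zero] at hpath

lemma Int.cast_le_floor_div_of_mul_le {K : Type*} [Field K] [LinearOrder K]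
    [IsStrictOrderedRing K] [FloorRing K] {k : ℤ} {a d : K} (hd : 0 < d) (h : d * k ≤ a) :
    (k : K) ≤ ⌊a / d⌋ := by
  exact_mod_cast Int.le_floor.mpr ((le_div_iff₀ hd).mpr (by linarith))

theorem dom_valid_inequality_general
    {V : Type*} (A : V → V → Prop) (s t : V)
    (p : V → ℝ)
    (hsrc : ∀ v, v ≠ s → Relation.TransGen A s v)
    (hsink : ∀ v, v ≠ t → Relation.TransGen A v t)
    (Δ : Set (V → ℝ))
    (L0 LΔ : V → V → ℝ)
    (hL0 : ∀ i j, Relation.TransGen A i j → IsLongest A p i j (L0 i j))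
    (hLΔ : ∀ i j, Relation.TransGen A i j → IsWorst A p Δ i j (LΔ i j))
    (M : ℝ) :
    ((∀ H : Set V, s ∉ H → t ∉ H →
        (∃ x, Sched A s p x ∧ x t ≤ M ∧ XAnchored A s p Δ x H) →
        ∀ j ∈ H, L0 s j < LΔ s j →
          L0 s j + (LΔ s j - L0 s j) + L0 j t ≤ M) ∧
      (∀ (z : V → ℝ) (j : V) (hj : ℝ), j ≠ s → j ≠ t →
        (hj = 0 ∨ hj = 1) → L0 s j < LΔ s j →
        z t ≤ M → L0 s j + (LΔ s j - L0 s j) * hj ≤ z j → L0 j t ≤ z t - z j →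
        hj ≤ (⌊(M - (L0 s j + L0 j t)) / (LΔ s j - L0 s j)⌋ : ℝ))) := by
  constructor
  · rintro H hsH htH ⟨x, hx, hxt, hanc⟩ j hjH -
    have hstart := hanc.le_of_isWorst hjH (hLΔ s j (hsrc j (ne_of_mem_of_not_mem hjH hsH)))
    have htail := hx.le_sub_of_isLongest (hL0 j t (hsink j (ne_of_mem_of_not_mem hjH htH)))
    linarith
  · rintro z j hj - - hbin hlt hzt hzj hzjt
    obtain ⟨k, rfl⟩ : ∃ k : ℤ, (k : ℝ) = hj := by
      rcases hbin with rfl | rfl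
      exacts [⟨0, Int.cast_zero⟩, ⟨1, Int.cast_one⟩]
    exact Int.cast_le_floor_div_of_mul_le (sub_pos.mpr hlt) (by linarith)

/-- valid inequality: if `H` is anchored then every `j ∈ H` with
`L^Δ(s,j) > L⁰(s,j)` satisfies `M ≥ L⁰(s,j) + (L^Δ(s,j) - L⁰(s,j)) + L⁰(j,t)`;
more generally any schedule-value `z` with the stated constraints forces the floor
bound on a binary `h_j`. -/
theorem dom_valid_inequality
    {V : Type*} [Fintype V] (A : V → V → Prop) (s t : V)
    (p : V → ℝ) (hp : ∀ v, 0 ≤ p v) (hps : p s = 0)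
    (hacyc : ∀ v, ¬ Relation.TransGen A v v)
    (hsrc : ∀ v, v ≠ s → Relation.TransGen A s v)
    (hsink : ∀ v, v ≠ t → Relation.TransGen A v t)
    (Δ : Set (V → ℝ)) (hΔne : Δ.Nonempty) (hΔnonneg : ∀ δ ∈ Δ, ∀ v, 0 ≤ δ v)
    (hΔst : ∀ δ ∈ Δ, δ s = 0 ∧ δ t = 0)
    (L0 LΔ : V → V → ℝ)
    (hL0 : ∀ i j, Relation.TransGen A i j → IsLongest A p i j (L0 i j))
    (hLΔ : ∀ i j, Relation.TransGen A i j → IsWorst A p Δ i j (LΔ i j))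
    (M : ℝ) :
    ((∀ H : Set V, s ∉ H → t ∉ H →
        (∃ x, Sched A s p x ∧ x t ≤ M ∧ XAnchored A s p Δ x H) →
        ∀ j ∈ H, L0 s j < LΔ s j →
          L0 s j + (LΔ s j - L0 s j) + L0 j t ≤ M) ∧
      (∀ (z : V → ℝ) (j : V) (hj : ℝ), j ≠ s → j ≠ t →
        (hj = 0 ∨ hj = 1) → L0 s j < LΔ s j →
        z t ≤ M → L0 s j + (LΔ s j - L0 s j) * hj ≤ z j → L0 j t ≤ z t - z j →
        hj ≤ (⌊(M - (L0 s j + L0 j t)) / (LΔ s j - L0 s j)⌋ : ℝ))) :=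
  dom_valid_inequality_general A s t p hsrc hsink Δ L0 LΔ hL0 hLΔ M
end

section
/- (Projection of (Dom).) Let P_Dom be the polytope of pairs (z,h) ∈ ℝ^{J∪{s,t}} × [0,1]^J with z_s = 0, z ≥ 0, z_t ≤ M, and z_j − z_i ≥ L⁰(i,j) + (L^Δ(i,j) − L⁰(i,j)) h_j for all i ≺ j (h_s = 1, h_t = 0). Then the projection of P_Dom onto h equals { h ∈ [0,1]^J : for every s–t chain C in the transitive closure of G, Σ_{(i,j)∈C, j≠t} (L⁰(i,j) + (L^Δ(i,j) − L⁰(i,j)) h_j) + L⁰(j_C, t) ≤ M }, where j_C is the last vertex of C before t. -/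
/-!
For fixed `h`, the constraints say that `z` is a potential for the arc weights
`w(i,j) = L⁰(i,j) + (L^Δ(i,j) − L⁰(i,j)) h_j` on the transitive closure of `G`; for `j = t`
this is `L⁰(i,t)` because `h_t = 0`. Telescoping along a chain bounds its weight by
`z_t − z_s ≤ M`. Conversely the weights are nonnegative (`L⁰ ≥ 0` and `L⁰ ≤ L^Δ`), and the
closure is a finite strict order, so the longest-path length from `s` is a potential that
vanishes at `s`, is nonnegative, and at `t` is the heaviest chain weight, hence at most `M`.
-/

open Relation

section PathWeights

variable {V : Type*}

lemma pathLen_nonneg {q : V → ℝ} (hq : ∀ v, 0 ≤ q v) (l : List V) : 0 ≤ PathLen q l :=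
  List.sum_nonneg fun _ hx => by
    obtain ⟨a, -, rfl⟩ := List.mem_map.1 hx
    exact hq a

lemma pathLen_mono {q q' : V → ℝ} (hq : ∀ v, q v ≤ q' v) (l : List V) :
    PathLen q l ≤ PathLen q' l :=
  List.sum_le_sum (by simpa using fun a _ => hq a)

lemma IsLongest.nonneg {A : V → V → Prop} {q : V → ℝ} {i j : V} {L : ℝ}
    (hq : ∀ v, 0 ≤ q v) (hL : IsLongest A q i j L) : 0 ≤ L := by
  obtain ⟨l, -, rfl⟩ := hL.1
  exact pathLen_nonneg hq l

lemma IsLongest.le_of_isWorst {A : V → V → Prop} {p : V → ℝ} {Δ : Set (V → ℝ)} {i j : V}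
    {L LΔ : ℝ} (hΔ : Δ.Nonempty) (hΔnonneg : ∀ δ ∈ Δ, ∀ v, 0 ≤ δ v)
    (hL : IsLongest A p i j L) (hLΔ : IsWorst A p Δ i j LΔ) : L ≤ LΔ := by
  obtain ⟨l, hl, rfl⟩ := hL.1
  obtain ⟨δ, hδ⟩ := hΔ
  calc PathLen p l ≤ PathLen (fun v => p v + δ v) l :=
        pathLen_mono (fun v => le_add_of_nonneg_right (hΔnonneg δ hδ v)) l
    _ ≤ LΔ := hLΔ.2 ⟨δ, hδ, l, hl, rfl⟩

section IsPath

variable {r : V → V → Prop} {a b c x y : V} {l : List V}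

lemma isPath_singleton : IsPath r a b [x] ↔ x = a ∧ x = b := by
  refine ⟨fun ⟨_, _, ha, hb⟩ => ⟨Option.some.inj ha, Option.some.inj hb⟩, ?_⟩
  rintro ⟨rfl, rfl⟩
  exact ⟨List.cons_ne_nil _ _, List.isChain_singleton x, rfl, rfl⟩

lemma isPath_cons_cons : IsPath r a b (x :: y :: l) ↔ x = a ∧ r a y ∧ IsPath r y b (y :: l) := by
  constructor
  · rintro ⟨-, hc, ha, hb⟩
    obtain rfl := Option.some.inj ha
    obtain ⟨hxy, hc⟩ := List.isChain_cons_cons.1 hc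
    exact ⟨rfl, hxy, List.cons_ne_nil _ _, hc, rfl, by rwa [List.getLast?_cons_cons] at hb⟩
  · rintro ⟨rfl, hxy, -, hc, -, hb⟩
    exact ⟨List.cons_ne_nil _ _, List.isChain_cons_cons.2 ⟨hxy, hc⟩, rfl,
      by rwa [List.getLast?_cons_cons]⟩

lemma IsPath.concat (hl : IsPath r a b l) (hbc : r b c) : IsPath r a c (l ++ [c]) := by
  induction l generalizing a with
  | nil => simp [IsPath] at hl
  | cons x l ih =>
    cases l with
    | nil =>
      obtain ⟨rfl, rfl⟩ := isPath_singleton.1 hl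
      simpa [isPath_cons_cons, isPath_singleton] using hbc
    | cons y l =>
      obtain ⟨rfl, hxy, hl⟩ := isPath_cons_cons.1 hl
      exact isPath_cons_cons.2 ⟨rfl, hxy, ih hl⟩

lemma IsPath.rel [IsTrans V r] : IsPath r a b (x :: y :: l) → r a b := by
  induction l generalizing a x y with
  | nil => simp only [isPath_cons_cons, isPath_singleton]; rintro ⟨-, hay, -, rfl⟩; exact hay
  | cons z l ih =>
    rw [isPath_cons_cons]
    rintro ⟨-, hay, hl⟩
    exact _root_.trans hay (ih hl)

lemma IsPath.eq_singleton_of_self [IsStrictOrder V r] (hl : IsPath r a a l) : l = [a] := by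
  match l, hl with
  | [], hl => simp [IsPath] at hl
  | [x], hl => rw [(isPath_singleton.1 hl).1]
  | _ :: _ :: _, hl => exact absurd hl.rel (irrefl a)

lemma IsPath.nodup [IsStrictOrder V r] (hl : IsPath r a b l) : l.Nodup :=
  (List.isChain_iff_pairwise.1 hl.2.1).imp fun hab => ne_of_irrefl hab

lemma finite_setOf_isPath [Finite V] [IsStrictOrder V r] (a b : V) :
    {l | IsPath r a b l}.Finite := by
  have := Fintype.ofFinite V
  exact (List.finite_length_le V (Fintype.card V)).subset fun _ hl => hl.nodup.length_le_card

end IsPath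

section LenW

variable {w : V → V → ℝ} {r : V → V → Prop} {a b : V} {l : List V}

@[simp]
lemma lenW_cons_cons (x y : V) (l : List V) : LenW w (x :: y :: l) = w x y + LenW w (y :: l) :=
  rfl

@[simp]
lemma lenW_singleton (x : V) : LenW w [x] = 0 :=
  rfl

lemma lenW_nonneg (hw : ∀ a b, r a b → 0 ≤ w a b) (hl : IsPath r a b l) : 0 ≤ LenW w l := by
  induction l generalizing a with
  | nil => exact le_rfl
  | cons x l ih =>
    cases l with
    | nil => exact le_rfl
    | cons y l =>
      obtain ⟨rfl, hxy, hl⟩ := isPath_cons_cons.1 hl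
      exact add_nonneg (hw x y hxy) (ih hl)

lemma lenW_concat (hl : IsPath r a b l) (c : V) : LenW w (l ++ [c]) = LenW w l + w b c := by
  induction l generalizing a with
  | nil => simp [IsPath] at hl
  | cons x l ih =>
    cases l with
    | nil => obtain ⟨rfl, rfl⟩ := isPath_singleton.1 hl; simp
    | cons y l =>
      obtain ⟨rfl, -, hl⟩ := isPath_cons_cons.1 hl
      change LenW w (x :: y :: (l ++ [c])) = _
      rw [lenW_cons_cons, ← List.cons_append, ih hl, lenW_cons_cons, add_assoc]

lemma lenW_le_sub {z : V → ℝ} (hz : ∀ a b, r a b → w a b ≤ z b - z a) (hl : IsPath r a b l) :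
    LenW w l ≤ z b - z a := by
  induction l generalizing a with
  | nil => simp [IsPath] at hl
  | cons x l ih =>
    cases l with
    | nil => obtain ⟨rfl, rfl⟩ := isPath_singleton.1 hl; simp
    | cons y l =>
      obtain ⟨rfl, hxy, hl⟩ := isPath_cons_cons.1 hl
      have := hz x y hxy
      have := ih hl
      simp only [lenW_cons_cons]
      linarith

end LenW

/-- The longest `s`–`v` path length, or the junk value `0` when `v` is unreachable from `s`. -/
noncomputable def longestPathFrom (r : V → V → Prop) (w : V → V → ℝ) (s v : V) : ℝ :=
  sSup (LenW w '' {l | IsPath r s v l})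

section LongestPath

variable {r : V → V → Prop} [IsStrictOrder V r] {w : V → V → ℝ} {s v : V}

lemma longestPathFrom_self : longestPathFrom r w s s = 0 := by
  have : {l | IsPath r s s l} = {[s]} :=
    Set.eq_singleton_iff_unique_mem.2
      ⟨isPath_singleton.2 ⟨rfl, rfl⟩, fun _ hl => IsPath.eq_singleton_of_self hl⟩
  simp [longestPathFrom, this]

variable [Finite V]

lemma lenW_le_longestPathFrom {l : List V} (hl : IsPath r s v l) :
    LenW w l ≤ longestPathFrom r w s v :=
  le_csSup ((finite_setOf_isPath s v).image _).bddAbove ⟨l, hl, rfl⟩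

lemma exists_lenW_eq_longestPathFrom (hs : ∀ v, v ≠ s → r s v) (v : V) :
    ∃ l, IsPath r s v l ∧ LenW w l = longestPathFrom r w s v := by
  have hne : {l | IsPath r s v l}.Nonempty := by
    by_cases hv : v = s
    · exact ⟨[s], isPath_singleton.2 ⟨rfl, hv.symm⟩⟩
    · exact ⟨[s, v], isPath_cons_cons.2 ⟨rfl, hs v hv, isPath_singleton.2 ⟨rfl, rfl⟩⟩⟩
  exact (hne.image _).csSup_mem ((finite_setOf_isPath s v).image _)

lemma longestPathFrom_nonneg (hs : ∀ v, v ≠ s → r s v) (hw : ∀ a b, r a b → 0 ≤ w a b) (v : V) :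
    0 ≤ longestPathFrom r w s v := by
  obtain ⟨l, hl, hlen⟩ := exists_lenW_eq_longestPathFrom (w := w) hs v
  exact hlen ▸ lenW_nonneg hw hl

lemma longestPathFrom_add_le (hs : ∀ v, v ≠ s → r s v) {i j : V} (hij : r i j) :
    longestPathFrom r w s i + w i j ≤ longestPathFrom r w s j := by
  obtain ⟨l, hl, hlen⟩ := exists_lenW_eq_longestPathFrom (w := w) hs i
  rw [← hlen, ← lenW_concat hl]
  exact lenW_le_longestPathFrom (hl.concat hij)

lemma longestPathFrom_le_iff (hs : ∀ v, v ≠ s → r s v) {M : ℝ} :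
    longestPathFrom r w s v ≤ M ↔ ∀ l, IsPath r s v l → LenW w l ≤ M := by
  refine ⟨fun hM l hl => (lenW_le_longestPathFrom hl).trans hM, fun hM => ?_⟩
  obtain ⟨l, hl, hlen⟩ := exists_lenW_eq_longestPathFrom (w := w) hs v
  exact hlen ▸ hM l hl

/-- The longest-path lengths from `s` are the witness. -/
theorem exists_potential_iff_forall_lenW_le (hs : ∀ v, v ≠ s → r s v)
    (hw : ∀ a b, r a b → 0 ≤ w a b) (t : V) (M : ℝ) :
    (∃ z : V → ℝ, z s = 0 ∧ (∀ v, 0 ≤ z v) ∧ z t ≤ M ∧ ∀ i j, r i j → w i j ≤ z j - z i) ↔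
      ∀ l, IsPath r s t l → LenW w l ≤ M := by
  constructor
  · rintro ⟨z, hzs, -, hzt, hz⟩ l hl
    have := lenW_le_sub hz hl
    linarith
  · intro hM
    refine ⟨longestPathFrom r w s, longestPathFrom_self, longestPathFrom_nonneg hs hw,
      (longestPathFrom_le_iff hs).2 hM, fun i j hij => ?_⟩
    have := longestPathFrom_add_le (w := w) hs hij
    linarith

end LongestPath

end PathWeights

theorem dom_projection_general
    {V : Type*} [Fintype V] [DecidableEq V] (A : V → V → Prop) (s t : V)
    (p : V → ℝ) (hp : ∀ v, 0 ≤ p v)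
    (hacyc : ∀ v, ¬ Relation.TransGen A v v)
    (hsrc : ∀ v, v ≠ s → Relation.TransGen A s v)
    (Δ : Set (V → ℝ)) (hΔne : Δ.Nonempty) (hΔnonneg : ∀ δ ∈ Δ, ∀ v, 0 ≤ δ v)
    (L0 LΔ : V → V → ℝ)
    (hL0 : ∀ i j, Relation.TransGen A i j → IsLongest A p i j (L0 i j))
    (hLΔ : ∀ i j, Relation.TransGen A i j → IsWorst A p Δ i j (LΔ i j))
    (M : ℝ) (h : V → ℝ) (hh : ∀ v, 0 ≤ h v ∧ h v ≤ 1) (hht : h t = 0) :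
    (∃ z : V → ℝ, z s = 0 ∧ (∀ v, 0 ≤ z v) ∧ z t ≤ M ∧
        ∀ i j, Relation.TransGen A i j →
          L0 i j + (LΔ i j - L0 i j) * h j ≤ z j - z i) ↔
      (∀ C : List V, IsPath (fun a b => Relation.TransGen A a b) s t C →
        LenW (fun i j => if j = t then L0 i t
          else L0 i j + (LΔ i j - L0 i j) * h j) C ≤ M) := by
  have : IsStrictOrder V (TransGen A) := { irrefl := hacyc, trans := fun _ _ _ => .trans }
  have hw_nonneg (i j : V) (hij : TransGen A i j) : 0 ≤ L0 i j + (LΔ i j - L0 i j) * h j :=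
    add_nonneg ((hL0 i j hij).nonneg hp) <| mul_nonneg
      (sub_nonneg.2 ((hL0 i j hij).le_of_isWorst hΔne hΔnonneg (hLΔ i j hij))) (hh j).1
  have hw : (fun i j => if j = t then L0 i t else L0 i j + (LΔ i j - L0 i j) * h j) =
      fun i j => L0 i j + (LΔ i j - L0 i j) * h j := by
    funext i j
    split_ifs with hj
    · simp [hj, hht]
    · rfl
  rw [hw]
  exact exists_potential_iff_forall_lenW_le hsrc hw_nonneg t M

/-- projection of (Dom): for fixed `h ∈ [0,1]^J` (with `h t = 0`),
a feasible `z` exists iff every `s`–`t` chain `C` in the transitive closure of `G`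
satisfies `Σ_{(i,j)∈C, j≠t} (L⁰(i,j) + (L^Δ(i,j) − L⁰(i,j)) h_j) + L⁰(j_C,t) ≤ M`. -/
theorem dom_projection
    {V : Type*} [Fintype V] [DecidableEq V] (A : V → V → Prop) (s t : V)
    (p : V → ℝ) (hp : ∀ v, 0 ≤ p v) (hps : p s = 0)
    (hacyc : ∀ v, ¬ Relation.TransGen A v v)
    (hsrc : ∀ v, v ≠ s → Relation.TransGen A s v)
    (hsink : ∀ v, v ≠ t → Relation.TransGen A v t)
    (Δ : Set (V → ℝ)) (hΔne : Δ.Nonempty) (hΔnonneg : ∀ δ ∈ Δ, ∀ v, 0 ≤ δ v)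
    (hΔst : ∀ δ ∈ Δ, δ s = 0 ∧ δ t = 0)
    (L0 LΔ : V → V → ℝ)
    (hL0 : ∀ i j, Relation.TransGen A i j → IsLongest A p i j (L0 i j))
    (hLΔ : ∀ i j, Relation.TransGen A i j → IsWorst A p Δ i j (LΔ i j))
    (M : ℝ) (h : V → ℝ) (hh : ∀ v, 0 ≤ h v ∧ h v ≤ 1) (hht : h t = 0) :
    (∃ z : V → ℝ, z s = 0 ∧ (∀ v, 0 ≤ z v) ∧ z t ≤ M ∧
        ∀ i j, Relation.TransGen A i j →
          L0 i j + (LΔ i j - L0 i j) * h j ≤ z j - z i) ↔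
      (∀ C : List V, IsPath (fun a b => Relation.TransGen A a b) s t C →
        LenW (fun i j => if j = t then L0 i t
          else L0 i j + (LΔ i j - L0 i j) * h j) C ≤ M) :=
  dom_projection_general A s t p hp hacyc hsrc Δ hΔne hΔnonneg L0 LΔ hL0 hLΔ M h hh hht
end

section
/- (Series-parallel critical lemma.) Let G be a series-parallel DAG with terminals s and t, and p nominal processing times. If G(p) is quasi-critical (every job i satisfies L⁰(s,i) + L⁰(i,t) = L⁰(s,t)), then G(p) is critical (every s–t path has length L⁰(s,t)). -/
/-- Series-parallel digraphs with terminals, living inside an ambient vertex type: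
`IsSP A S s t` means the arc relation `A`, supported on the vertex set `S`, is a
series-parallel digraph with terminals `s` and `t`. -/
inductive IsSP {V : Type*} : (V → V → Prop) → Set V → V → V → Prop
  | base (s t : V) (h : s ≠ t) :
      IsSP (fun a b => a = s ∧ b = t) {s, t} s t
  | series {A₁ A₂ : V → V → Prop} {S₁ S₂ : Set V} {s m t : V} :
      IsSP A₁ S₁ s m → IsSP A₂ S₂ m t → S₁ ∩ S₂ = {m} →
      IsSP (fun a b => A₁ a b ∨ A₂ a b) (S₁ ∪ S₂) s t
  | parallel {A₁ A₂ : V → V → Prop} {S₁ S₂ : Set V} {s t : V} :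
      IsSP A₁ S₁ s t → IsSP A₂ S₂ s t → S₁ ∩ S₂ = {s, t} →
      2 < S₁.ncard → 2 < S₂.ncard →
      IsSP (fun a b => A₁ a b ∨ A₂ a b) (S₁ ∪ S₂) s t

/-!
Induction on the series-parallel decomposition, with "every interior vertex lies on a longest
`s`–`t` path" as the hypothesis and "every `s`–`t` path is longest" as the conclusion. In a series
composition every `s`–`t` path is an `s`–`m` path followed by an `m`–`t` path, lengths add, and
the concatenation is longest exactly when both halves are. In a parallel composition every
`s`–`t` path stays on one side; a longest path through an interior vertex of a side stays on that
side, so the overall maximum is attained on each side. The hypothesis `L⁰(s,v) + L⁰(v,t) = L⁰(s,t)`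
yields a longest path through `v` by concatenating longest `s`–`v` and `v`–`t` paths.
-/

section

variable {V : Type*}

section Paths

variable {A B : V → V → Prop} {i j k : V} {l l' : List V}

theorem isPath_iff :
    IsPath A i j l ↔ l ≠ [] ∧ l.IsChain A ∧ l.head? = some i ∧ l.getLast? = some j :=
  Iff.rfl

theorem IsPath.ne_nil (h : IsPath A i j l) : l ≠ [] := h.1

theorem IsPath.exists_eq_cons (h : IsPath A i j l) : ∃ l₀, l = i :: l₀ := by
  obtain ⟨b, l₀, rfl⟩ := List.exists_cons_of_ne_nil h.ne_nil
  exact ⟨l₀, by rw [Option.some_inj.1 h.2.2.1]⟩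

theorem isPath_singleton_s18 (A : V → V → Prop) (j : V) : IsPath A j j [j] :=
  ⟨List.cons_ne_nil _ _, List.isChain_singleton _, rfl, rfl⟩

theorem isPath_singleton_iff {v : V} : IsPath A i j [v] ↔ v = i ∧ v = j := by
  simp [isPath_iff, eq_comm]

theorem isPath_cons_cons_iff {a b : V} :
    IsPath A i j (a :: b :: l) ↔ a = i ∧ A a b ∧ IsPath A b j (b :: l) := by
  simp only [isPath_iff, List.isChain_cons_cons, List.head?_cons, List.getLast?_cons_cons,
    Option.some_inj, ne_eq, reduceCtorEq, not_false_eq_true, true_and]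
  tauto

theorem IsPath.cons (hA : A i j) (h : IsPath A j k l) : IsPath A i k (i :: l) := by
  obtain ⟨l, rfl⟩ := h.exists_eq_cons
  exact isPath_cons_cons_iff.2 ⟨rfl, hA, h⟩

theorem IsPath.mono (h : IsPath A i j l) (hAB : ∀ a b, A a b → B a b) : IsPath B i j l :=
  ⟨h.1, h.2.1.imp hAB, h.2.2⟩

theorem IsPath.induction {motive : ∀ i l, IsPath A i j l → Prop}
    (singleton : motive j [j] (isPath_singleton_s18 A j))
    (cons : ∀ i b l (hib : A i b) (hl : IsPath A b j l),
      motive b l hl → motive i (i :: l) (hl.cons hib))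
    (h : IsPath A i j l) : motive i l h := by
  induction l generalizing i with
  | nil => exact absurd rfl h.ne_nil
  | cons a l ih =>
    cases l with
    | nil =>
      obtain ⟨rfl, rfl⟩ := isPath_singleton_iff.1 h
      exact singleton
    | cons b l =>
      obtain ⟨rfl, hab, hl⟩ := isPath_cons_cons_iff.1 h
      exact cons a b _ hab hl (ih hl)

theorem IsPath.append (h : IsPath A i j l) (h' : IsPath A j k l') :
    IsPath A i k (l ++ l'.tail) := by
  induction h using IsPath.induction with
  | singleton =>
    obtain ⟨l', rfl⟩ := h'.exists_eq_cons
    exact h'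
  | cons i b l hib _ ih => exact ih.cons hib

theorem pathLen_cons (q : V → ℝ) (a : V) (hl : l ≠ []) :
    PathLen q (a :: l) = q a + PathLen q l := by
  obtain ⟨b, l, rfl⟩ := List.exists_cons_of_ne_nil hl
  simp [PathLen]

theorem IsPath.pathLen_append (q : V → ℝ) (h : IsPath A i j l) (h' : IsPath B j k l') :
    PathLen q (l ++ l'.tail) = PathLen q l + PathLen q l' := by
  induction h using IsPath.induction with
  | singleton =>
    obtain ⟨l', rfl⟩ := h'.exists_eq_cons
    simp [PathLen]
  | cons i b l _ hl ih =>
    rw [List.cons_append, pathLen_cons q i (by simp [hl.ne_nil]), pathLen_cons q i hl.ne_nil, ih,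
      add_assoc]

theorem IsPath.mem_right (h : IsPath A i j l) : j ∈ l :=
  List.mem_of_getLast? h.2.2.2

theorem IsPath.imp_of_invariant (P : V → Prop) (hP : ∀ a b, P a → A a b → B a b ∧ P b)
    (hi : P i) (h : IsPath A i j l) : IsPath B i j l := by
  induction h using IsPath.induction with
  | singleton => exact isPath_singleton_s18 B _
  | cons i b l hib _ ih =>
    obtain ⟨hB, hb⟩ := hP i b hi hib
    exact (ih hb).cons hB

theorem IsPath.mem_of_ne {S : Set V} (hA : ∀ a b, A a b → a ∈ S ∧ b ∈ S) (h : IsPath A i j l)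
    (hij : i ≠ j) {v : V} (hv : v ∈ l) : v ∈ S := by
  have key : l = [i] ∨ ∀ v ∈ l, v ∈ S := by
    clear hij hv
    induction h using IsPath.induction with
    | singleton => exact Or.inl rfl
    | cons i b l hib _ ih =>
      refine Or.inr fun v hv => ?_
      rcases List.mem_cons.1 hv with rfl | hv
      · exact (hA _ _ hib).1
      · rcases ih with rfl | ih
        · exact (List.mem_singleton.1 hv) ▸ (hA _ _ hib).2
        · exact ih v hv
  rcases key with rfl | key
  · exact absurd (isPath_singleton_iff.1 h).2 hij
  · exact key v hv

end Paths

theorem Set.exists_mem_ne_ne_of_two_lt_ncard {T : Set V} (hT : 2 < T.ncard) (a b : V) :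
    ∃ v ∈ T, v ≠ a ∧ v ≠ b := by
  have hab : ({a, b} : Set V).ncard < T.ncard :=
    ((Set.ncard_insert_le a {b}).trans_eq (by rw [Set.ncard_singleton])).trans_lt hT
  obtain ⟨v, hv, hvab⟩ := Set.exists_mem_notMem_of_ncard_lt_ncard hab
  simp only [Set.mem_insert_iff, Set.mem_singleton_iff, not_or] at hvab
  exact ⟨v, hv, hvab⟩

namespace IsSP

variable {A : V → V → Prop} {S : Set V} {s t : V}

theorem source_mem (h : IsSP A S s t) : s ∈ S := by
  induction h with
  | base => exact Set.mem_insert _ _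
  | series _ _ _ ih₁ => exact Or.inl ih₁
  | parallel _ _ _ _ _ ih₁ => exact Or.inl ih₁

theorem target_mem (h : IsSP A S s t) : t ∈ S := by
  induction h with
  | base => exact Set.mem_insert_of_mem _ rfl
  | series _ _ _ _ ih₂ => exact Or.inr ih₂
  | parallel _ _ _ _ _ ih₁ => exact Or.inl ih₁

theorem ne (h : IsSP A S s t) : s ≠ t := by
  induction h with
  | base _ _ hst => exact hst
  | @series _ _ S₁ S₂ s _ _ h₁ h₂ hI ih₁ =>
    intro hst
    have hs : s ∈ S₁ ∩ S₂ := ⟨h₁.source_mem, hst ▸ h₂.target_mem⟩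
    rw [hI] at hs
    exact ih₁ hs
  | parallel _ _ _ _ _ ih₁ => exact ih₁

theorem mem_of_arc (h : IsSP A S s t) {a b : V} (hab : A a b) : a ∈ S ∧ b ∈ S := by
  induction h with
  | base =>
    obtain ⟨rfl, rfl⟩ := hab
    exact ⟨Set.mem_insert _ _, Set.mem_insert_of_mem _ rfl⟩
  | series _ _ _ ih₁ ih₂ | parallel _ _ _ _ _ ih₁ ih₂ =>
    rcases hab with hab | hab
    · exact ⟨Or.inl (ih₁ hab).1, Or.inl (ih₁ hab).2⟩
    · exact ⟨Or.inr (ih₂ hab).1, Or.inr (ih₂ hab).2⟩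

theorem not_arc_to_source (h : IsSP A S s t) (a : V) : ¬ A a s := by
  induction h with
  | base _ _ hst => exact fun hab => hst hab.2
  | @series _ _ S₁ S₂ s _ _ h₁ h₂ hI ih₁ =>
    rintro (hab | hab)
    · exact ih₁ hab
    · have hs : s ∈ S₁ ∩ S₂ := ⟨h₁.source_mem, (h₂.mem_of_arc hab).2⟩
      rw [hI] at hs
      exact h₁.ne hs
  | parallel _ _ _ _ _ ih₁ ih₂ => exact fun hab => hab.elim ih₁ ih₂

theorem not_arc_from_target (h : IsSP A S s t) (b : V) : ¬ A t b := by
  induction h with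
  | base _ _ hst => exact fun hab => hst hab.1.symm
  | @series _ _ S₁ S₂ _ _ t h₁ h₂ hI _ ih₂ =>
    rintro (hab | hab)
    · have ht : t ∈ S₁ ∩ S₂ := ⟨(h₁.mem_of_arc hab).1, h₂.target_mem⟩
      rw [hI] at ht
      exact h₂.ne ht.symm
    · exact ih₂ hab
  | parallel _ _ _ _ _ ih₁ ih₂ => exact fun hab => hab.elim ih₁ ih₂

theorem mem_of_isPath (h : IsSP A S s t) {l : List V} {v : V} (hl : IsPath A s t l) (hv : v ∈ l) :
    v ∈ S :=
  hl.mem_of_ne (fun _ _ => h.mem_of_arc) h.ne hv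

theorem exists_isPath_of_mem (h : IsSP A S s t) {v : V} (hv : v ∈ S) :
    (∃ l, IsPath A s v l) ∧ ∃ l, IsPath A v t l := by
  induction h generalizing v with
  | base s t =>
    have hst : IsPath (fun a b => a = s ∧ b = t) s t [s, t] :=
      (isPath_singleton_s18 _ t).cons ⟨rfl, rfl⟩
    rcases hv with rfl | rfl
    · exact ⟨⟨_, isPath_singleton_s18 _ _⟩, _, hst⟩
    · exact ⟨⟨_, hst⟩, _, isPath_singleton_s18 _ _⟩
  | series h₁ h₂ _ ih₁ ih₂ =>
    rcases hv with hv | hv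
    · obtain ⟨⟨l₁, hl₁⟩, l₂, hl₂⟩ := ih₁ hv
      obtain ⟨-, l₃, hl₃⟩ := ih₂ h₂.source_mem
      exact ⟨⟨l₁, hl₁.mono fun _ _ => Or.inl⟩,
        _, (hl₂.mono fun _ _ => Or.inl).append (hl₃.mono fun _ _ => Or.inr)⟩
    · obtain ⟨⟨l₁, hl₁⟩, l₂, hl₂⟩ := ih₂ hv
      obtain ⟨⟨l₃, hl₃⟩, -⟩ := ih₁ h₁.target_mem
      exact ⟨⟨_, (hl₃.mono fun _ _ => Or.inl).append (hl₁.mono fun _ _ => Or.inr)⟩,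
        l₂, hl₂.mono fun _ _ => Or.inr⟩
  | parallel _ _ _ _ _ ih₁ ih₂ =>
    rcases hv with hv | hv
    · obtain ⟨⟨l₁, hl₁⟩, l₂, hl₂⟩ := ih₁ hv
      exact ⟨⟨l₁, hl₁.mono fun _ _ => Or.inl⟩, l₂, hl₂.mono fun _ _ => Or.inl⟩
    · obtain ⟨⟨l₁, hl₁⟩, l₂, hl₂⟩ := ih₂ hv
      exact ⟨⟨l₁, hl₁.mono fun _ _ => Or.inr⟩, l₂, hl₂.mono fun _ _ => Or.inr⟩

end IsSP

theorem eq_pair_of_isPath_single_arc {s t : V} {l : List V} (hst : s ≠ t)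
    (hl : IsPath (fun a b => a = s ∧ b = t) s t l) : l = [s, t] := by
  obtain ⟨l, rfl⟩ := hl.exists_eq_cons
  rcases l with _ | ⟨b, _ | ⟨c, l⟩⟩
  · exact absurd (isPath_singleton_iff.1 hl).2 hst
  · obtain ⟨-, ⟨-, rfl⟩, -⟩ := isPath_cons_cons_iff.1 hl
    rfl
  · obtain ⟨-, ⟨-, rfl⟩, hl⟩ := isPath_cons_cons_iff.1 hl
    exact absurd (isPath_cons_cons_iff.1 hl).2.1.1.symm hst

def IsLongestPath (A : V → V → Prop) (q : V → ℝ) (s t : V) (l : List V) : Prop :=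
  IsPath A s t l ∧ ∀ l', IsPath A s t l' → PathLen q l' ≤ PathLen q l

def IsCritical (A : V → V → Prop) (q : V → ℝ) (s t : V) : Prop :=
  ∀ l, IsPath A s t l → IsLongestPath A q s t l

/-- The condition `L⁰(s,v) + L⁰(v,t) = L⁰(s,t)` in path form: `v` lies on a longest `s`–`t` path.
Only interior vertices are constrained; at a terminal it would just ask for a longest path. -/
def IsQuasiCritical (A : V → V → Prop) (q : V → ℝ) (S : Set V) (s t : V) : Prop :=
  ∀ v ∈ S, v ≠ s → v ≠ t → ∃ l, IsLongestPath A q s t l ∧ v ∈ l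

section Series

variable {A₁ A₂ : V → V → Prop} {S₁ S₂ : Set V} {s m t : V} {q : V → ℝ}

theorem IsSP.series_isPath_right (h₁ : IsSP A₁ S₁ s m) (h₂ : IsSP A₂ S₂ m t)
    (hI : S₁ ∩ S₂ = {m}) {i j : V} {l : List V} (hi : i ∈ S₂) (hl : IsPath (A₁ ⊔ A₂) i j l) :
    IsPath A₂ i j l := by
  refine hl.imp_of_invariant (· ∈ S₂) (fun a b ha hab => ?_) hi
  rcases hab with hab | hab
  · have hm : a ∈ S₁ ∩ S₂ := ⟨(h₁.mem_of_arc hab).1, ha⟩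
    rw [hI, Set.mem_singleton_iff] at hm
    exact absurd (hm ▸ hab) (h₁.not_arc_from_target b)
  · exact ⟨hab, (h₂.mem_of_arc hab).2⟩

theorem IsSP.series_isPath_split (h₁ : IsSP A₁ S₁ s m) (h₂ : IsSP A₂ S₂ m t)
    (hI : S₁ ∩ S₂ = {m}) {i : V} {l : List V} (hi : i ∈ S₁) (hl : IsPath (A₁ ⊔ A₂) i t l) :
    ∃ l₁ l₂, IsPath A₁ i m l₁ ∧ IsPath A₂ m t l₂ ∧ l = l₁ ++ l₂.tail := by
  induction hl using IsPath.induction with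
  | singleton =>
    have ht : t ∈ S₁ ∩ S₂ := ⟨hi, h₂.target_mem⟩
    rw [hI] at ht
    exact absurd ht h₂.ne.symm
  | cons i b l hib hl ih =>
    by_cases him : i = m
    · subst him
      exact ⟨[i], i :: l, isPath_singleton_s18 _ _,
        h₁.series_isPath_right h₂ hI h₂.source_mem (hl.cons hib), rfl⟩
    · have hib : A₁ i b := hib.resolve_right fun hib => by
        have hm : i ∈ S₁ ∩ S₂ := ⟨hi, (h₂.mem_of_arc hib).1⟩
        rw [hI] at hm
        exact him hm
      obtain ⟨l₁, l₂, hl₁, hl₂, rfl⟩ := ih (h₁.mem_of_arc hib).2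
      exact ⟨i :: l₁, l₂, hl₁.cons hib, hl₂, rfl⟩

theorem IsSP.series_isLongestPath_append_iff (h₁ : IsSP A₁ S₁ s m) (h₂ : IsSP A₂ S₂ m t)
    (hI : S₁ ∩ S₂ = {m}) {l₁ l₂ : List V} (hl₁ : IsPath A₁ s m l₁) (hl₂ : IsPath A₂ m t l₂) :
    IsLongestPath (A₁ ⊔ A₂) q s t (l₁ ++ l₂.tail) ↔
      IsLongestPath A₁ q s m l₁ ∧ IsLongestPath A₂ q m t l₂ := by
  have hlen := hl₁.pathLen_append q hl₂
  have hpath : ∀ {l₁' l₂'}, IsPath A₁ s m l₁' → IsPath A₂ m t l₂' →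
      IsPath (A₁ ⊔ A₂) s t (l₁' ++ l₂'.tail) := fun h₁' h₂' =>
    (h₁'.mono fun _ _ => Or.inl).append (h₂'.mono fun _ _ => Or.inr)
  refine ⟨fun ⟨_, hmax⟩ => ⟨⟨hl₁, fun l₁' hl₁' => ?_⟩, ⟨hl₂, fun l₂' hl₂' => ?_⟩⟩,
    fun ⟨⟨_, hmax₁⟩, ⟨_, hmax₂⟩⟩ => ⟨hpath hl₁ hl₂, fun l' hl' => ?_⟩⟩
  · have := hmax _ (hpath hl₁' hl₂)
    rw [hlen, hl₁'.pathLen_append q hl₂] at this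
    linarith
  · have := hmax _ (hpath hl₁ hl₂')
    rw [hlen, hl₁.pathLen_append q hl₂'] at this
    linarith
  · obtain ⟨l₁', l₂', hl₁', hl₂', rfl⟩ := h₁.series_isPath_split h₂ hI h₁.source_mem hl'
    rw [hlen, hl₁'.pathLen_append q hl₂']
    exact add_le_add (hmax₁ l₁' hl₁') (hmax₂ l₂' hl₂')

theorem IsQuasiCritical.series_left (h₁ : IsSP A₁ S₁ s m) (h₂ : IsSP A₂ S₂ m t)
    (hI : S₁ ∩ S₂ = {m}) (hq : IsQuasiCritical (A₁ ⊔ A₂) q (S₁ ∪ S₂) s t) :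
    IsQuasiCritical A₁ q S₁ s m := by
  intro v hv hvs hvm
  have hvt : v ≠ t := by
    rintro rfl
    have ht : v ∈ S₁ ∩ S₂ := ⟨hv, h₂.target_mem⟩
    rw [hI] at ht
    exact hvm ht
  obtain ⟨L, hL, hvL⟩ := hq v (Or.inl hv) hvs hvt
  obtain ⟨l₁, l₂, hl₁, hl₂, rfl⟩ := h₁.series_isPath_split h₂ hI h₁.source_mem hL.1
  refine ⟨l₁, ((h₁.series_isLongestPath_append_iff h₂ hI hl₁ hl₂).1 hL).1, ?_⟩
  refine (List.mem_append.1 hvL).resolve_right fun hv₂ => hvm ?_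
  have hm : v ∈ S₁ ∩ S₂ := ⟨hv, h₂.mem_of_isPath hl₂ (List.mem_of_mem_tail hv₂)⟩
  rwa [hI] at hm

theorem IsQuasiCritical.series_right (h₁ : IsSP A₁ S₁ s m) (h₂ : IsSP A₂ S₂ m t)
    (hI : S₁ ∩ S₂ = {m}) (hq : IsQuasiCritical (A₁ ⊔ A₂) q (S₁ ∪ S₂) s t) :
    IsQuasiCritical A₂ q S₂ m t := by
  intro v hv hvm hvt
  have hvs : v ≠ s := by
    rintro rfl
    have hs : v ∈ S₁ ∩ S₂ := ⟨h₁.source_mem, hv⟩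
    rw [hI] at hs
    exact hvm hs
  obtain ⟨L, hL, hvL⟩ := hq v (Or.inr hv) hvs hvt
  obtain ⟨l₁, l₂, hl₁, hl₂, rfl⟩ := h₁.series_isPath_split h₂ hI h₁.source_mem hL.1
  refine ⟨l₂, ((h₁.series_isLongestPath_append_iff h₂ hI hl₁ hl₂).1 hL).2, ?_⟩
  refine (List.mem_append.1 hvL).elim (fun hv₁ => absurd ?_ hvm) List.mem_of_mem_tail
  have hm : v ∈ S₁ ∩ S₂ := ⟨h₁.mem_of_isPath hl₁ hv₁, hv⟩
  rwa [hI] at hm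

theorem IsCritical.series (h₁ : IsSP A₁ S₁ s m) (h₂ : IsSP A₂ S₂ m t) (hI : S₁ ∩ S₂ = {m})
    (hc₁ : IsCritical A₁ q s m) (hc₂ : IsCritical A₂ q m t) : IsCritical (A₁ ⊔ A₂) q s t := by
  intro l hl
  obtain ⟨l₁, l₂, hl₁, hl₂, rfl⟩ := h₁.series_isPath_split h₂ hI h₁.source_mem hl
  exact (h₁.series_isLongestPath_append_iff h₂ hI hl₁ hl₂).2 ⟨hc₁ l₁ hl₁, hc₂ l₂ hl₂⟩

end Series

section Parallel

variable {A₁ A₂ : V → V → Prop} {S₁ S₂ : Set V} {s t : V} {q : V → ℝ}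

theorem IsSP.parallel_isPath_of_arc_left (h₁ : IsSP A₁ S₁ s t) (h₂ : IsSP A₂ S₂ s t)
    (hI : S₁ ∩ S₂ = {s, t}) {b : V} {l : List V} (hsb : A₁ s b)
    (hl : IsPath (A₁ ⊔ A₂) b t l) : IsPath A₁ s t (s :: l) := by
  refine (hl.imp_of_invariant (fun x => x ∈ S₁ ∧ x ≠ s) (fun x y ⟨hx, hxs⟩ hxy => ?_)
    ⟨(h₁.mem_of_arc hsb).2, fun hbs => h₁.not_arc_to_source s (hbs ▸ hsb)⟩).cons hsb
  have hxy : A₁ x y := hxy.resolve_right fun hxy => by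
    have hx' : x ∈ S₁ ∩ S₂ := ⟨hx, (h₂.mem_of_arc hxy).1⟩
    rw [hI, Set.mem_insert_iff, Set.mem_singleton_iff] at hx'
    exact h₂.not_arc_from_target y ((hx'.resolve_left hxs) ▸ hxy)
  exact ⟨hxy, (h₁.mem_of_arc hxy).2, fun hys => h₁.not_arc_to_source x (hys ▸ hxy)⟩

theorem IsSP.parallel_isPath_cases (h₁ : IsSP A₁ S₁ s t) (h₂ : IsSP A₂ S₂ s t)
    (hI : S₁ ∩ S₂ = {s, t}) {l : List V} (hl : IsPath (A₁ ⊔ A₂) s t l) :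
    IsPath A₁ s t l ∨ IsPath A₂ s t l := by
  obtain ⟨l, rfl⟩ := hl.exists_eq_cons
  rcases l with _ | ⟨b, l⟩
  · exact absurd (isPath_singleton_iff.1 hl).2 h₁.ne
  obtain ⟨-, hsb | hsb, hl⟩ := isPath_cons_cons_iff.1 hl
  · exact Or.inl (h₁.parallel_isPath_of_arc_left h₂ hI hsb hl)
  · refine Or.inr (h₂.parallel_isPath_of_arc_left h₁ (by rwa [Set.inter_comm]) hsb ?_)
    rwa [sup_comm]

theorem IsSP.parallel_isPath_left_of_mem (h₁ : IsSP A₁ S₁ s t) (h₂ : IsSP A₂ S₂ s t)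
    (hI : S₁ ∩ S₂ = {s, t}) {l : List V} (hl : IsPath (A₁ ⊔ A₂) s t l) {v : V} (hvl : v ∈ l)
    (hv : v ∈ S₁) (hvs : v ≠ s) (hvt : v ≠ t) : IsPath A₁ s t l := by
  refine (h₁.parallel_isPath_cases h₂ hI hl).resolve_right fun hl₂ => ?_
  have hv' : v ∈ S₁ ∩ S₂ := ⟨hv, h₂.mem_of_isPath hl₂ hvl⟩
  rw [hI, Set.mem_insert_iff, Set.mem_singleton_iff] at hv'
  exact hv'.elim hvs hvt

theorem IsQuasiCritical.parallel_left (h₁ : IsSP A₁ S₁ s t) (h₂ : IsSP A₂ S₂ s t)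
    (hI : S₁ ∩ S₂ = {s, t}) (hq : IsQuasiCritical (A₁ ⊔ A₂) q (S₁ ∪ S₂) s t) :
    IsQuasiCritical A₁ q S₁ s t := by
  intro v hv hvs hvt
  obtain ⟨L, ⟨hL, hmax⟩, hvL⟩ := hq v (Or.inl hv) hvs hvt
  exact ⟨L, ⟨h₁.parallel_isPath_left_of_mem h₂ hI hL hvL hv hvs hvt,
    fun l hl => hmax l (hl.mono fun _ _ => Or.inl)⟩, hvL⟩

theorem IsQuasiCritical.parallel_right (h₁ : IsSP A₁ S₁ s t) (h₂ : IsSP A₂ S₂ s t)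
    (hI : S₁ ∩ S₂ = {s, t}) (hq : IsQuasiCritical (A₁ ⊔ A₂) q (S₁ ∪ S₂) s t) :
    IsQuasiCritical A₂ q S₂ s t := by
  rw [sup_comm, Set.union_comm] at hq
  exact hq.parallel_left h₂ h₁ (by rwa [Set.inter_comm])

theorem IsSP.parallel_isLongestPath_of_isCritical_left (h₁ : IsSP A₁ S₁ s t)
    (h₂ : IsSP A₂ S₂ s t) (hI : S₁ ∩ S₂ = {s, t}) (hS₁ : 2 < S₁.ncard)
    (hq : IsQuasiCritical (A₁ ⊔ A₂) q (S₁ ∪ S₂) s t) (hc₁ : IsCritical A₁ q s t) {l : List V}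
    (hl : IsPath A₁ s t l) : IsLongestPath (A₁ ⊔ A₂) q s t l := by
  obtain ⟨w, hw, hws, hwt⟩ := Set.exists_mem_ne_ne_of_two_lt_ncard hS₁ s t
  obtain ⟨L, ⟨hL, hmax⟩, hwL⟩ := hq w (Or.inl hw) hws hwt
  have hL₁ := h₁.parallel_isPath_left_of_mem h₂ hI hL hwL hw hws hwt
  exact ⟨hl.mono fun _ _ => Or.inl, fun l' hl' => (hmax l' hl').trans ((hc₁ l hl).2 L hL₁)⟩

theorem IsCritical.parallel (h₁ : IsSP A₁ S₁ s t) (h₂ : IsSP A₂ S₂ s t)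
    (hI : S₁ ∩ S₂ = {s, t}) (hS₁ : 2 < S₁.ncard) (hS₂ : 2 < S₂.ncard)
    (hq : IsQuasiCritical (A₁ ⊔ A₂) q (S₁ ∪ S₂) s t) (hc₁ : IsCritical A₁ q s t)
    (hc₂ : IsCritical A₂ q s t) : IsCritical (A₁ ⊔ A₂) q s t := by
  intro l hl
  rcases h₁.parallel_isPath_cases h₂ hI hl with hl | hl
  · exact h₁.parallel_isLongestPath_of_isCritical_left h₂ hI hS₁ hq hc₁ hl
  · rw [sup_comm, Set.union_comm] at hq
    rw [sup_comm]
    exact h₂.parallel_isLongestPath_of_isCritical_left h₁ (by rwa [Set.inter_comm]) hS₂ hq hc₂ hl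

end Parallel

theorem IsSP.isCritical_of_isQuasiCritical {A : V → V → Prop} {S : Set V} {s t : V} {q : V → ℝ}
    (h : IsSP A S s t) (hq : IsQuasiCritical A q S s t) : IsCritical A q s t := by
  induction h with
  | base s t hst =>
    intro l hl
    refine ⟨hl, fun l' hl' => ?_⟩
    rw [eq_pair_of_isPath_single_arc hst hl, eq_pair_of_isPath_single_arc hst hl']
  | series h₁ h₂ hI ih₁ ih₂ =>
    exact .series h₁ h₂ hI (ih₁ (hq.series_left h₁ h₂ hI)) (ih₂ (hq.series_right h₁ h₂ hI))
  | parallel h₁ h₂ hI hS₁ hS₂ ih₁ ih₂ =>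
    exact .parallel h₁ h₂ hI hS₁ hS₂ hq (ih₁ (hq.parallel_left h₁ h₂ hI))
      (ih₂ (hq.parallel_right h₁ h₂ hI))

theorem IsSP.isQuasiCritical_of_isLongest {A : V → V → Prop} {S : Set V} {s t : V} {q : V → ℝ}
    {L : V → V → ℝ} (h : IsSP A S s t)
    (hL : ∀ i j, (∃ l, IsPath A i j l) → IsLongest A q i j (L i j))
    (hquasi : ∀ i ∈ S, L s i + L i t = L s t) : IsQuasiCritical A q S s t := by
  intro v hv _ _
  obtain ⟨hsv, hvt⟩ := h.exists_isPath_of_mem hv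
  obtain ⟨⟨l₁, hl₁, hlen₁⟩, -⟩ := hL s v hsv
  obtain ⟨⟨l₂, hl₂, hlen₂⟩, -⟩ := hL v t hvt
  have hl := hl₁.append hl₂
  refine ⟨_, ⟨hl, fun l' hl' => ?_⟩, List.mem_append_left _ hl₁.mem_right⟩
  rw [hl₁.pathLen_append q hl₂, hlen₁, hlen₂, hquasi v hv]
  exact (hL s t ⟨l', hl'⟩).2 ⟨l', hl', rfl⟩

end

theorem series_parallel_quasicritical_implies_critical_general
    {V : Type*} (A : V → V → Prop) (S : Set V) (s t : V)
    (hSP : IsSP A S s t)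
    (p : V → ℝ)
    (L0 : V → V → ℝ)
    (hL0 : ∀ i j, (∃ l, IsPath A i j l) → IsLongest A p i j (L0 i j))
    (hquasi : ∀ i ∈ S, L0 s i + L0 i t = L0 s t) :
    ∀ l : List V, IsPath A s t l → PathLen p l = L0 s t := by
  intro l hl
  have hcrit := hSP.isCritical_of_isQuasiCritical (hSP.isQuasiCritical_of_isLongest hL0 hquasi)
  obtain ⟨⟨L, hL, hlen⟩, hmax⟩ := hL0 s t ⟨l, hl⟩
  exact le_antisymm (hmax ⟨l, hl, rfl⟩) (hlen ▸ (hcrit l hl).2 L hL)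

/-- series-parallel critical lemma: if `G` is series-parallel with
terminals `s`, `t` and `G(p)` is quasi-critical (`L⁰(s,i) + L⁰(i,t) = L⁰(s,t)` for
every vertex `i`), then `G(p)` is critical (every `s`–`t` path has length `L⁰(s,t)`). -/
theorem series_parallel_quasicritical_implies_critical
    {V : Type*} (A : V → V → Prop) (S : Set V) (s t : V)
    (hSP : IsSP A S s t)
    (p : V → ℝ) (hp : ∀ v, 0 ≤ p v)
    (L0 : V → V → ℝ)
    (hL0 : ∀ i j, (∃ l, IsPath A i j l) → IsLongest A p i j (L0 i j))
    (hquasi : ∀ i ∈ S, L0 s i + L0 i t = L0 s t) :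
    ∀ l : List V, IsPath A s t l → PathLen p l = L0 s t :=
  series_parallel_quasicritical_implies_critical_general A S s t hSP p L0 hL0 hquasi
end
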